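/- arXiv:1905.01029 — 5 statements merged into one kernel-verified Lean document; each statement's English description precedes it below -/
import Mathlib

section
/- (Correctness of the query decomposition) Let S be a finite set of points in ℝ^d with |S| ≥ 2, written as a union S = K ∪ L. Let δ_K be the closest-pair distance of K (∞ if |K| ≤ 1), δ_L the closest-pair distance of L, and for each a ∈ L let ψ_a = dist(a, nearest point of S \ {a} within ‖·‖_∞-distance δ of a), where δ = min(δ_K, δ_L), with ψ_a = ∞ if no such point exists. Then the closest-pair distance of S equals min(δ_K, min_{a ∈ L} ψ_a). -/
/-!
A closest pair `p, q` of `S = K ∪ L` either lies in `K`, giving `δ_K`, or has a point `a` in `L`.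
In the latter case its partner `b` satisfies `dist(a, b) = δ_S ≤ min δ_K δ_L`, so every
coordinate of `b - a` is at most `δ` and `b` is found by the query from `a`.
-/

open scoped ENNReal

/-- The closest-pair distance of a finite set: the minimum of `edist p q` over distinct
`p, q ∈ T`, which is `∞` when `|T| ≤ 1`. -/
noncomputable def closestPairDist {α : Type*} [PseudoEMetricSpace α] (T : Finset α) : ℝ≥0∞ :=
  ⨅ p ∈ T, ⨅ q ∈ T, ⨅ _ : p ≠ q, edist p q

open Finset

section ClosestPair

variable {α : Type*} [PseudoEMetricSpace α] {T U : Finset α}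

lemma closestPairDist_le {p q : α} (hp : p ∈ T) (hq : q ∈ T) (hpq : p ≠ q) :
    closestPairDist T ≤ edist p q :=
  (iInf₂_le p hp).trans <| (iInf₂_le q hq).trans <| iInf_le _ hpq

lemma closestPairDist_anti (h : T ⊆ U) : closestPairDist U ≤ closestPairDist T :=
  le_iInf₂ fun _ hp => le_iInf₂ fun _ hq => le_iInf fun hpq =>
    closestPairDist_le (h hp) (h hq) hpq

lemma exists_edist_eq_closestPairDist (hT : T.Nontrivial) :
    ∃ p ∈ T, ∃ q ∈ T, p ≠ q ∧ edist p q = closestPairDist T := by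
  classical
  obtain ⟨x, hx, y, hy, hxy⟩ := hT
  obtain ⟨⟨p, q⟩, hpq, hmin⟩ :=
    T.offDiag.exists_min_image (fun pq => edist pq.1 pq.2) ⟨(x, y), mem_offDiag.2 ⟨hx, hy, hxy⟩⟩
  obtain ⟨hp, hq, hne⟩ := mem_offDiag.1 hpq
  refine ⟨p, hp, q, hq, hne, le_antisymm ?_ (closestPairDist_le hp hq hne)⟩
  exact le_iInf₂ fun u hu => le_iInf₂ fun v hv => le_iInf fun huv =>
    hmin (u, v) (mem_offDiag.2 ⟨hu, hv, huv⟩)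

lemma le_closestPairDist_of_forall_closestPair {c : ℝ≥0∞}
    (h : ∀ p ∈ T, ∀ q ∈ T, p ≠ q → edist p q = closestPairDist T → c ≤ edist p q) :
    c ≤ closestPairDist T :=
  le_iInf₂ fun p hp => le_iInf₂ fun q hq => le_iInf fun hpq => by
    obtain ⟨p', hp', q', hq', hpq', hmin⟩ := exists_edist_eq_closestPairDist ⟨p, hp, q, hq, hpq⟩
    calc c ≤ edist p' q' := h p' hp' q' hq' hpq' hmin
      _ = closestPairDist T := hmin
      _ ≤ edist p q := closestPairDist_le hp hq hpq

theorem closestPairDist_union_eq_min_query [DecidableEq α] {K L : Finset α}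
    {near : α → α → Prop}
    (hnear : ∀ a b, edist a b ≤ min (closestPairDist K) (closestPairDist L) → near a b) :
    closestPairDist (K ∪ L) =
      min (closestPairDist K)
        (⨅ a ∈ L, ⨅ b ∈ K ∪ L, ⨅ _ : b ≠ a, ⨅ _ : near a b, edist a b) := by
  set query := ⨅ a ∈ L, ⨅ b ∈ K ∪ L, ⨅ _ : b ≠ a, ⨅ _ : near a b, edist a b
  have query_le : ∀ a ∈ L, ∀ b ∈ K ∪ L, b ≠ a →
      edist a b ≤ min (closestPairDist K) (closestPairDist L) → query ≤ edist a b :=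
    fun a ha b hb hba hab =>
      (iInf₂_le a ha).trans <| (iInf₂_le b hb).trans <| (iInf_le _ hba).trans <|
        iInf_le _ (hnear a b hab)
  refine le_antisymm (le_min (closestPairDist_anti subset_union_left) ?_) ?_
  · exact le_iInf₂ fun a ha => le_iInf₂ fun b hb => le_iInf fun hba => le_iInf fun _ =>
      edist_comm b a ▸ closestPairDist_le hb (mem_union_right K ha) hba
  refine le_closestPairDist_of_forall_closestPair fun p hp q hq hpq hmin => ?_
  have hδ : edist p q ≤ min (closestPairDist K) (closestPairDist L) :=
    hmin ▸ le_min (closestPairDist_anti subset_union_left)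
      (closestPairDist_anti subset_union_right)
  by_cases hK : p ∈ K ∧ q ∈ K
  · exact min_le_of_left_le (closestPairDist_le hK.1 hK.2 hpq)
  refine min_le_of_right_le ?_
  rcases not_and_or.mp hK with hpK | hqK
  · exact query_le p ((mem_union.1 hp).resolve_left hpK) q hq hpq.symm hδ
  · rw [edist_comm] at hδ ⊢
    exact query_le q ((mem_union.1 hq).resolve_left hqK) p hp hpq hδ

end ClosestPair

theorem closestPair_query_decomposition_general (d : ℕ)
    (S K L : Finset (EuclideanSpace ℝ (Fin d)))
    (hS : (S : Set (EuclideanSpace ℝ (Fin d)))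
        = (K : Set (EuclideanSpace ℝ (Fin d))) ∪ (L : Set (EuclideanSpace ℝ (Fin d)))) :
    closestPairDist S =
      min (closestPairDist K)
        (⨅ a ∈ L, ⨅ b ∈ S, ⨅ _ : b ≠ a,
          ⨅ _ : ∀ i, edist (b i) (a i) ≤ min (closestPairDist K) (closestPairDist L),
            edist a b) := by
  classical
  obtain rfl : S = K ∪ L := by rw [← coe_inj, coe_union, hS]
  exact closestPairDist_union_eq_min_query fun a b hab i =>
    (PiLp.edist_apply_le b a i).trans (edist_comm b a ▸ hab)

/-- **Correctness of the query decomposition.** Let `S = K ∪ L` be a finite set of at least two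
points in `ℝ^d`, let `δ_K, δ_L` be the closest-pair distances of `K` and `L` and
`δ = min δ_K δ_L`. For `a ∈ L`, let `ψ_a` be the distance from `a` to the nearest point of
`S \ {a}` lying within `‖·‖_∞`-distance `δ` of `a` (`∞` if there is none). Then the
closest-pair distance of `S` equals `min δ_K (⨅ a ∈ L, ψ_a)`. -/
theorem closestPair_query_decomposition (d : ℕ)
    (S K L : Finset (EuclideanSpace ℝ (Fin d)))
    (hS : (S : Set (EuclideanSpace ℝ (Fin d)))
        = (K : Set (EuclideanSpace ℝ (Fin d))) ∪ (L : Set (EuclideanSpace ℝ (Fin d))))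
    (hcard : 2 ≤ S.card) :
    closestPairDist S =
      min (closestPairDist K)
        (⨅ a ∈ L, ⨅ b ∈ S, ⨅ _ : b ≠ a,
          ⨅ _ : ∀ i, edist (b i) (a i) ≤ min (closestPairDist K) (closestPairDist L),
            edist a b) :=
  closestPair_query_decomposition_general d S K L hS
end

section
/- Consequently, in a d-dimensional range tree built on n points, the number of nodes whose canonical subset has size at least √n is O(√n · log^{d-1} n). -/
/-- A `d`-dimensional range tree on a multiset of points. A `1`-dimensional range tree is a
binary tree whose leaves are the points. A `(d+1)`-dimensional range tree is a binary tree
whose leaves are the points and in which every node additionally carries an associated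
`d`-dimensional range tree (intended to be built on the node's canonical subset). -/
inductive RTree (α : Type*) : ℕ → Type _ where
  | leaf1 : α → RTree α 1
  | node1 : RTree α 1 → RTree α 1 → RTree α 1
  | leafS {d : ℕ} : α → RTree α (d + 1) → RTree α (d + 2)
  | nodeS {d : ℕ} : RTree α (d + 2) → RTree α (d + 2) → RTree α (d + 1) → RTree α (d + 2)

namespace RTree

/-- The canonical multiset of points stored in (the primary tree of) a range tree. -/
def pts {α : Type*} : ∀ {d : ℕ}, RTree α d → Multiset α
  | _, .leaf1 a => {a}
  | _, .node1 l r => pts l + pts r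
  | _, .leafS a _ => {a}
  | _, .nodeS l r _ => pts l + pts r

/-- Well-formedness: every associated lower-dimensional tree is built on exactly the
canonical subset of its node, and every primary tree is balanced (the numbers of points
in the two children of a node differ by at most one). -/
def WF {α : Type*} : ∀ {d : ℕ}, RTree α d → Prop
  | _, .leaf1 _ => True
  | _, .node1 l r => WF l ∧ WF r ∧
      (pts l).card ≤ (pts r).card + 1 ∧ (pts r).card ≤ (pts l).card + 1
  | _, .leafS a t => WF t ∧ pts t = {a}
  | _, .nodeS l r t => WF l ∧ WF r ∧ WF t ∧ pts t = pts l + pts r ∧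
      (pts l).card ≤ (pts r).card + 1 ∧ (pts r).card ≤ (pts l).card + 1

/-- The number of nodes (over all levels, including nodes of all associated trees) whose
canonical subset has size at least `a`. -/
def heavyCount {α : Type*} (a : ℕ) : ∀ {d : ℕ}, RTree α d → ℕ
  | _, .leaf1 _ => if a ≤ 1 then 1 else 0
  | _, .node1 l r =>
      (if a ≤ (pts l).card + (pts r).card then 1 else 0) + heavyCount a l + heavyCount a r
  | _, .leafS _ t => (if a ≤ 1 then 1 else 0) + heavyCount a t
  | _, .nodeS l r t =>
      (if a ≤ (pts l).card + (pts r).card then 1 else 0)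
        + heavyCount a l + heavyCount a r + heavyCount a t

end RTree

/-!
A subtree on fewer than `a` points contains no heavy node, and in a balanced tree the light child
of a heavy node is about as large as its sibling, so its points pay for the node. This yields, by
induction on the tree, `a * (heavyCount a t + 2) ≤ 4 d (x + 1)^(d - 1) n` for a `d`-dimensional
tree on `n ≤ 2^x` points with `a ≤ n`: children have at most `2^(x-1)` points, and
`b^(m+1) + (b+1)^m ≤ (b+1)^(m+1)` absorbs the associated tree into one more factor `x + 1`.
For `n = 4^k`, `a = 2^k` and `x = 2k` this is the bound `O(√n log^(d-1) n)`.
-/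

theorem Nat.pow_succ_add_succ_pow_le (b m : ℕ) : b ^ (m + 1) + (b + 1) ^ m ≤ (b + 1) ^ (m + 1) :=
  calc b ^ (m + 1) + (b + 1) ^ m = b * b ^ m + (b + 1) ^ m := by ring
    _ ≤ b * (b + 1) ^ m + (b + 1) ^ m := by gcongr; exact Nat.le_succ b
    _ = (b + 1) ^ (m + 1) := by ring

theorem le_two_pow_of_balanced {L R y : ℕ} (hLR : L ≤ R + 1) (h : L + R ≤ 2 ^ (y + 1)) :
    L ≤ 2 ^ y := by
  rw [pow_succ] at h
  omega

theorem mul_node_add_two_le {a c L R u v : ℕ} (hc : 4 ≤ c) (hLR : L ≤ R + 1)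
    (hRL : R ≤ L + 1) (hL : 1 ≤ L) (hR : 1 ≤ R) (ha : a ≤ L + R)
    (hu : a ≤ L → a * (u + 2) ≤ c * L) (hu0 : L < a → u = 0)
    (hv : a ≤ R → a * (v + 2) ≤ c * R) (hv0 : R < a → v = 0) :
    a * (1 + u + v + 2) ≤ c * (L + R) := by
  have hcL : 4 * L ≤ c * L := Nat.mul_le_mul_right L hc
  have hcR : 4 * R ≤ c * R := Nat.mul_le_mul_right R hc
  rcases le_or_gt a L with haL | haL <;> rcases le_or_gt a R with haR | haR
  · nlinarith [hu haL, hv haR]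
  · nlinarith [hu haL, hv0 haR]
  · nlinarith [hu0 haL, hv haR]
  · nlinarith [hu0 haL, hv0 haR]

namespace RTree

variable {α : Type*}

theorem one_le_card_pts : ∀ {d : ℕ} (t : RTree α d), 1 ≤ t.pts.card
  | _, .leaf1 _ | _, .leafS _ _ => by simp [pts]
  | _, .node1 l _ | _, .nodeS l _ _ => by simpa [pts] using le_add_right (one_le_card_pts l)

theorem heavyCount_eq_zero_of_card_lt {a : ℕ} :
    ∀ {d : ℕ} {t : RTree α d}, t.WF → t.pts.card < a → t.heavyCount a = 0
  | _, .leaf1 _, _, h => by simp_all [pts, heavyCount]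
  | _, .node1 l r, ⟨hl, hr, _⟩, h => by
    simp only [pts, Multiset.card_add] at h
    have hl0 : l.heavyCount a = 0 := heavyCount_eq_zero_of_card_lt hl (by omega)
    have hr0 : r.heavyCount a = 0 := heavyCount_eq_zero_of_card_lt hr (by omega)
    simp [heavyCount, hl0, hr0, h]
  | _, .leafS _ T, hw, h => by
    obtain ⟨hT, hpT⟩ := hw
    simp only [pts, Multiset.card_singleton] at h
    have hT0 : T.heavyCount a = 0 := heavyCount_eq_zero_of_card_lt hT (by simpa [hpT] using h)
    simp [heavyCount, hT0, h]
  | _, .nodeS l r T, hw, h => by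
    obtain ⟨hl, hr, hT, hpT, -⟩ := hw
    simp only [pts, Multiset.card_add] at h
    have hl0 : l.heavyCount a = 0 := heavyCount_eq_zero_of_card_lt hl (by omega)
    have hr0 : r.heavyCount a = 0 := heavyCount_eq_zero_of_card_lt hr (by omega)
    have hT0 : T.heavyCount a = 0 :=
      heavyCount_eq_zero_of_card_lt hT (by simpa [hpT, pts] using h)
    simp [heavyCount, hl0, hr0, hT0, h]

theorem mul_heavyCount_add_two_le (a : ℕ) : ∀ {d : ℕ} (t : RTree α d) (x : ℕ), t.WF →
    a ≤ t.pts.card → t.pts.card ≤ 2 ^ x →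
    a * (t.heavyCount a + 2) ≤ 4 * d * (x + 1) ^ (d - 1) * t.pts.card
  | _, .leaf1 _, _, _, ha, _ => by
    simp only [pts, Multiset.card_singleton] at ha
    simp only [heavyCount, if_pos ha]
    interval_cases a <;> simp [pts]
  | _, .node1 l r, x, ⟨hl, hr, hLR, hRL⟩, ha, hx => by
    simp only [pts, Multiset.card_add] at ha hx ⊢
    have hL := one_le_card_pts l
    have hR := one_le_card_pts r
    obtain ⟨y, rfl⟩ := Nat.exists_eq_add_one_of_ne_zero
      (Nat.one_lt_two_pow_iff.mp (show 1 < 2 ^ x by omega))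
    have hnode := mul_node_add_two_le (c := 4 * 1 * (y + 1) ^ (1 - 1)) (by simp) hLR hRL hL hR ha
      (fun h => mul_heavyCount_add_two_le a l y hl h (le_two_pow_of_balanced hLR hx))
      (heavyCount_eq_zero_of_card_lt hl)
      (fun h => mul_heavyCount_add_two_le a r y hr h
        (le_two_pow_of_balanced hRL (by rwa [add_comm])))
      (heavyCount_eq_zero_of_card_lt hr)
    simpa [heavyCount, ha] using hnode
  | _, @leafS _ d _ T, x, hw, ha, _ => by
    obtain ⟨hT, hpT⟩ := hw
    simp only [pts, Multiset.card_singleton] at ha ⊢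
    have ih := mul_heavyCount_add_two_le a T x hT (by simpa [hpT] using ha)
      (by simpa [hpT] using Nat.one_le_two_pow)
    simp only [hpT, Multiset.card_singleton, Nat.add_sub_cancel, mul_one] at ih
    have hpow : (x + 1) ^ d ≤ (x + 1) ^ (d + 1) := Nat.pow_le_pow_right x.succ_pos (Nat.le_succ d)
    rw [show d + 2 - 1 = d + 1 from rfl]
    simp only [heavyCount, if_pos ha, mul_one]
    nlinarith [Nat.one_le_pow d (x + 1) x.succ_pos]
  | _, @nodeS _ d l r T, x, hw, ha, hx => by
    obtain ⟨hl, hr, hT, hpT, hLR, hRL⟩ := hw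
    simp only [pts, Multiset.card_add] at ha hx ⊢
    have hL := one_le_card_pts l
    have hR := one_le_card_pts r
    obtain ⟨y, rfl⟩ := Nat.exists_eq_add_one_of_ne_zero
      (Nat.one_lt_two_pow_iff.mp (show 1 < 2 ^ x by omega))
    have hnode := mul_node_add_two_le
      (le_mul_of_le_of_one_le (by omega) (Nat.one_le_pow _ _ y.succ_pos)) hLR hRL hL hR ha
      (fun h => mul_heavyCount_add_two_le a l y hl h (le_two_pow_of_balanced hLR hx))
      (heavyCount_eq_zero_of_card_lt hl)
      (fun h => mul_heavyCount_add_two_le a r y hr h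
        (le_two_pow_of_balanced hRL (by rwa [add_comm])))
      (heavyCount_eq_zero_of_card_lt hr)
    have hassoc := mul_heavyCount_add_two_le a T (y + 1) hT (by simpa [hpT, pts] using ha)
      (by simpa [hpT, pts] using hx)
    simp only [hpT, Multiset.card_add, Nat.add_sub_cancel] at hassoc
    have hcoef := Nat.pow_succ_add_succ_pow_le (y + 1) d
    rw [show d + 2 - 1 = d + 1 from rfl] at hnode ⊢
    simp only [heavyCount, if_pos ha]
    calc a * (1 + l.heavyCount a + r.heavyCount a + T.heavyCount a + 2)
        ≤ a * (1 + l.heavyCount a + r.heavyCount a + 2) + a * (T.heavyCount a + 2) := by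
          linarith
      _ ≤ 4 * (d + 2) * ((y + 1) ^ (d + 1) + (y + 1 + 1) ^ d) * (l.pts.card + r.pts.card) := by
          nlinarith
      _ ≤ 4 * (d + 2) * (y + 1 + 1) ^ (d + 1) * (l.pts.card + r.pts.card) := by gcongr

end RTree

/-- In a `d`-dimensional range tree built on `n` points (for simplicity `n = 4^k`), the number
of nodes whose canonical subset has size at least `√n = 2^k` is `O(√n · log^(d-1) n)`. -/
theorem heavy_nodes_in_range_tree {α : Type*} :
    ∀ d : ℕ, 1 ≤ d → ∃ C : ℕ, ∀ (k : ℕ) (t : RTree α d), t.WF →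
      (t.pts).card = 4 ^ k →
      t.heavyCount (2 ^ k) ≤ C * 2 ^ k * (k + 1) ^ (d - 1) := by
  intro d _
  refine ⟨4 * d * 2 ^ (d - 1), fun k t ht hcard => ?_⟩
  have hsq : (4 : ℕ) ^ k = 2 ^ k * 2 ^ k := by rw [← mul_pow]; norm_num
  have hbound := t.mul_heavyCount_add_two_le (2 ^ k) (2 * k) ht
    (by rw [hcard, hsq]; exact Nat.le_mul_of_pos_left _ (Nat.two_pow_pos k))
    (by rw [hcard, pow_mul]; norm_num)
  rw [hcard, hsq] at hbound
  have hlog : (2 * k + 1) ^ (d - 1) ≤ 2 ^ (d - 1) * (k + 1) ^ (d - 1) := by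
    rw [← mul_pow]
    exact Nat.pow_le_pow_left (by omega) _
  refine Nat.le_of_mul_le_mul_left ?_ (Nat.two_pow_pos k)
  calc 2 ^ k * t.heavyCount (2 ^ k)
      ≤ 2 ^ k * (t.heavyCount (2 ^ k) + 2) := by gcongr; omega
    _ ≤ 4 * d * (2 * k + 1) ^ (d - 1) * (2 ^ k * 2 ^ k) := hbound
    _ ≤ 4 * d * (2 ^ (d - 1) * (k + 1) ^ (d - 1)) * (2 ^ k * 2 ^ k) := by gcongr
    _ = 2 ^ k * (4 * d * 2 ^ (d - 1) * 2 ^ k * (k + 1) ^ (d - 1)) := by ring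
end

section
/- (Decomposition in the halfspace query) Let S be a finite point set in ℝ^d, h a non-vertical hyperplane with lower halfspace H. Let Ξ be a convex polytope in dual space containing h*, with vertex set V, and set S_Ξ = {a ∈ S : a* is strictly below every point of Ξ} and L = ⋃_{v ∈ V} {a ∈ S : a ∈ H and a lies strictly above v*}. Then S ∩ H = S_Ξ ∪ L. -/
/-!
Identify a point `p = (p', p_d)` with the non-vertical dual hyperplane
`p* = {x : x_d = ⟨p', x'⟩ - p_d}`, whose height over `x'` is `dualHeight p x`; so
`h* = (c', -c_d)` and `H` is the set of points weakly below `(h*)*`. Duality preserves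
incidence and sides: `u` lies strictly below `a*` iff `a` lies strictly below `u*`. So `a ∈ S_Ξ`
says that `a` lies strictly below `u*` for every `u ∈ Ξ`, and since the height of `u*` over `a'`
is linear in `u`, it suffices to check this on the vertices of `Ξ`. Hence a point of `S ∩ H`
outside `S_Ξ` lies weakly above `v*` for some vertex `v`, i.e. in `L`; conversely `S_Ξ ⊆ H` by
taking `u = h*`.
-/

def dualHeight {n : ℕ} (p x : Fin (n + 1) → ℝ) : ℝ :=
  ∑ i : Fin n, p i.castSucc * x i.castSucc - p (Fin.last n)

section

variable {n : ℕ}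

theorem lt_dualHeight_comm {a u : Fin (n + 1) → ℝ} :
    u (Fin.last n) < dualHeight a u ↔ a (Fin.last n) < dualHeight u a := by
  have hsum :
      ∑ i : Fin n, a i.castSucc * u i.castSucc = ∑ i : Fin n, u i.castSucc * a i.castSucc :=
    Finset.sum_congr rfl fun _ _ => mul_comm _ _
  unfold dualHeight
  constructor <;> intro h <;> linarith

theorem dualHeight_snoc_neg (c x : Fin (n + 1) → ℝ) :
    dualHeight (Fin.snoc (fun i : Fin n => c i.castSucc) (-c (Fin.last n))) x
      = ∑ i : Fin n, c i.castSucc * x i.castSucc + c (Fin.last n) := by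
  simp [dualHeight, Fin.snoc_castSucc, Fin.snoc_last]

theorem isLinearMap_dualHeight_left (x : Fin (n + 1) → ℝ) :
    IsLinearMap ℝ fun p => dualHeight p x where
  map_add p q := by
    simp only [dualHeight, Pi.add_apply, add_mul, Finset.sum_add_distrib]
    ring
  map_smul t p := by
    simp only [dualHeight, Pi.smul_apply, smul_eq_mul, mul_assoc, ← Finset.mul_sum]
    ring

theorem lt_dualHeight_of_mem_convexHull {V : Set (Fin (n + 1) → ℝ)} {a u : Fin (n + 1) → ℝ}
    (hV : ∀ v ∈ V, a (Fin.last n) < dualHeight v a) (hu : u ∈ convexHull ℝ V) :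
    a (Fin.last n) < dualHeight u a :=
  convexHull_min hV (convex_halfSpace_gt (isLinearMap_dualHeight_left a) _) hu

end

theorem le_dualHeight_iff_of_mem_convexHull {n : ℕ} {V : Set (Fin (n + 1) → ℝ)}
    {h : Fin (n + 1) → ℝ} (hh : h ∈ convexHull ℝ V) (a : Fin (n + 1) → ℝ) :
    a (Fin.last n) ≤ dualHeight h a ↔
      (∀ u ∈ convexHull ℝ V, u (Fin.last n) < dualHeight a u) ∨
        (a (Fin.last n) ≤ dualHeight h a ∧ ∃ v ∈ V, dualHeight v a ≤ a (Fin.last n)) := by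
  constructor
  · intro haH
    by_cases hV : ∀ v ∈ V, a (Fin.last n) < dualHeight v a
    · exact .inl fun u hu => lt_dualHeight_comm.2 (lt_dualHeight_of_mem_convexHull hV hu)
    · push Not at hV
      exact .inr ⟨haH, hV⟩
  · rintro (hΞ | ⟨haH, -⟩)
    · exact (lt_dualHeight_comm.1 (hΞ h hh)).le
    · exact haH

/-- **Decomposition in the halfspace query.** Let `S ⊆ ℝ^(n+1)` be finite, let `h` be the
non-vertical hyperplane `x_d = c₁x₁ + ⋯ + cₙxₙ + c_{n+1}` with lower (closed) halfspace `H`,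
and let `Ξ = convexHull V` be a convex polytope in dual space containing the dual point
`h* = (c₁, …, cₙ, -c_{n+1})`. With
`S_Ξ = {a ∈ S : the dual hyperplane a* is strictly below every point of Ξ}` and
`L = ⋃_{v ∈ V} {a ∈ S : a ∈ H and a lies (weakly) above the primal hyperplane v*}`,
one has `S ∩ H = S_Ξ ∪ L`. -/
theorem halfspace_query_decomposition (n : ℕ)
    (S V : Finset (Fin (n + 1) → ℝ)) (c : Fin (n + 1) → ℝ)
    (hmem : (Fin.snoc (fun i : Fin n => c i.castSucc) (-c (Fin.last n)) : Fin (n + 1) → ℝ)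
      ∈ convexHull ℝ (V : Set (Fin (n + 1) → ℝ))) :
    {a | a ∈ S ∧
        a (Fin.last n) ≤ (∑ i : Fin n, c i.castSucc * a i.castSucc) + c (Fin.last n)}
      =
    {a | a ∈ S ∧ ∀ u ∈ convexHull ℝ (V : Set (Fin (n + 1) → ℝ)),
        u (Fin.last n) < (∑ i : Fin n, a i.castSucc * u i.castSucc) - a (Fin.last n)}
      ∪
    {a | a ∈ S ∧
        (a (Fin.last n) ≤ (∑ i : Fin n, c i.castSucc * a i.castSucc) + c (Fin.last n)) ∧
        ∃ v ∈ V,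
          (∑ i : Fin n, v i.castSucc * a i.castSucc) - v (Fin.last n) ≤ a (Fin.last n)} := by
  ext a
  have key := le_dualHeight_iff_of_mem_convexHull hmem a
  rw [dualHeight_snoc_neg] at key
  simp only [Set.mem_ofPred_eq, Set.mem_union, ← and_or_left]
  exact and_congr_right fun _ => key
end

section
/- (Correctness of the color-uniqueness-to-RCP reduction) Let S ⊆ ℝ² be a finite set of colored points with colors indexed by 1,…,k, and let D ≥ diam(S) be at least the maximum Euclidean distance between any two points of S (and D > 0). Map each point p = (p_x, p_y) with color i to p' = (p_x, p_y, 2·i·D) ∈ ℝ³, giving point set P. Then for any axis-parallel rectangle q ⊆ ℝ², the closest-pair distance of P ∩ (q × ℝ) is at most D if and only if some color has at least two points in S ∩ q. -/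
open scoped ENNReal

/-! Lifting a point to height `2 · col · D` keeps two points of the same color at their planar
distance, which is at most `D`, while it separates points of different colors vertically by at
least `2D > D`. So the lifted points over `q` contain a pair at distance `≤ D` exactly when two
points of one color lie in `q`. -/

section ClosestPair

variable {α β : Type*} [PseudoEMetricSpace α]

theorem closestPairDist_le_edist {T : Finset α} {p q : α} (hp : p ∈ T) (hq : q ∈ T)
    (hpq : p ≠ q) : closestPairDist T ≤ edist p q :=
  iInf₂_le_of_le p hp <| iInf₂_le_of_le q hq <| iInf_le _ hpq

theorem le_closestPairDist {T : Finset α} {r : ℝ≥0∞}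
    (h : ∀ p ∈ T, ∀ q ∈ T, p ≠ q → r ≤ edist p q) : r ≤ closestPairDist T :=
  le_iInf₂ fun p hp => le_iInf₂ fun q hq => le_iInf (h p hp q hq)

variable [DecidableEq α] {f : β → α} {s : Finset β}

theorem closestPairDist_image_le {a b : β} (ha : a ∈ s) (hb : b ∈ s) (hab : f a ≠ f b) :
    closestPairDist (s.image f) ≤ edist (f a) (f b) :=
  closestPairDist_le_edist (Finset.mem_image_of_mem f ha) (Finset.mem_image_of_mem f hb) hab

theorem le_closestPairDist_image {r : ℝ≥0∞}
    (h : ∀ a ∈ s, ∀ b ∈ s, a ≠ b → f a ≠ f b → r ≤ edist (f a) (f b)) :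
    r ≤ closestPairDist (s.image f) := by
  refine le_closestPairDist ?_
  simp only [Finset.forall_mem_image]
  exact fun a ha b hb hab => h a ha b hb (fun e => hab (congrArg f e)) hab

end ClosestPair

section WithHeight

def withHeight (p : EuclideanSpace ℝ (Fin 2)) (h : ℝ) : EuclideanSpace ℝ (Fin 3) :=
  WithLp.toLp 2 ![p 0, p 1, h]

variable (p q : EuclideanSpace ℝ (Fin 2)) (h h' : ℝ)

theorem dist_withHeight :
    dist (withHeight p h) (withHeight q h') = √(dist p q ^ 2 + (h - h') ^ 2) := by
  rw [EuclideanSpace.dist_eq, EuclideanSpace.dist_eq p q, Real.sq_sqrt (by positivity)]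
  simp [Fin.sum_univ_three, Fin.sum_univ_two, Real.dist_eq, sq_abs, withHeight]

theorem dist_withHeight_self_height : dist (withHeight p h) (withHeight q h) = dist p q := by
  simp [dist_withHeight]

theorem dist_le_dist_withHeight : dist p q ≤ dist (withHeight p h) (withHeight q h') := by
  rw [dist_withHeight]
  exact Real.le_sqrt_of_sq_le (le_add_of_nonneg_right (sq_nonneg _))

theorem abs_sub_le_dist_withHeight : |h - h'| ≤ dist (withHeight p h) (withHeight q h') := by
  rw [dist_withHeight]
  exact Real.abs_le_sqrt (le_add_of_nonneg_left (sq_nonneg _))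

variable {p q h h'}

theorem eq_of_withHeight_eq (e : withHeight p h = withHeight q h') : p = q :=
  dist_le_zero.1 <| (dist_le_dist_withHeight p q h h').trans (dist_eq_zero.2 e).le

end WithHeight

theorem two_mul_le_abs_sub_of_ne {m n : ℕ} (hmn : m ≠ n) {D : ℝ} (hD : 0 ≤ D) :
    2 * D ≤ |2 * m * D - 2 * n * D| := by
  have hone : (1 : ℝ) ≤ |(m : ℝ) - n| := by
    exact_mod_cast Int.one_le_abs (sub_ne_zero.2 (Int.natCast_inj.not.2 hmn))
  rw [show 2 * (m : ℝ) * D - 2 * n * D = 2 * D * (m - n) by ring, abs_mul,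
    abs_of_nonneg (by positivity : 0 ≤ 2 * D)]
  exact le_mul_of_one_le_right (by positivity) hone

theorem color_uniqueness_to_rcp_reduction_general
    [DecidableEq (EuclideanSpace ℝ (Fin 3))]
    (S : Finset (EuclideanSpace ℝ (Fin 2))) (col : EuclideanSpace ℝ (Fin 2) → ℕ)
    (D : ℝ) (hD : 0 < D) (hdiam : ∀ p ∈ S, ∀ q ∈ S, dist p q ≤ D)
    (x₁ x₂ y₁ y₂ : ℝ) :
    let lift : EuclideanSpace ℝ (Fin 2) → EuclideanSpace ℝ (Fin 3) :=
      fun p => WithLp.toLp 2 ![p 0, p 1, 2 * (col p : ℝ) * D]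
    let inq : EuclideanSpace ℝ (Fin 2) → Prop :=
      fun p => x₁ ≤ p 0 ∧ p 0 ≤ x₂ ∧ y₁ ≤ p 1 ∧ p 1 ≤ y₂
    (closestPairDist ((S.filter fun p => inq p).image lift) ≤ ENNReal.ofReal D
      ↔ ∃ p ∈ S, ∃ p' ∈ S, p ≠ p' ∧ col p = col p' ∧ inq p ∧ inq p') := by
  intro lift inq
  have lift_eq (p) : lift p = withHeight p (2 * col p * D) := rfl
  constructor
  · intro hle
    by_contra! hno
    have hfar :
        ENNReal.ofReal (2 * D) ≤ closestPairDist ((S.filter fun p => inq p).image lift) := by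
      refine le_closestPairDist_image fun a ha b hb hab _ => ?_
      rw [Finset.mem_filter] at ha hb
      rw [edist_dist, lift_eq, lift_eq]
      refine ENNReal.ofReal_le_ofReal <| (two_mul_le_abs_sub_of_ne ?_ hD.le).trans
        (abs_sub_le_dist_withHeight _ _ _ _)
      exact fun e => hno a ha.1 b hb.1 hab e ha.2 hb.2
    have h2D : 2 * D ≤ D := (ENNReal.ofReal_le_ofReal_iff hD.le).1 (hfar.trans hle)
    linarith
  · rintro ⟨p, hp, p', hp', hne, hcol, hinp, hinp'⟩
    calc closestPairDist ((S.filter fun p => inq p).image lift)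
        ≤ edist (lift p) (lift p') :=
          closestPairDist_image_le (Finset.mem_filter.2 ⟨hp, hinp⟩)
            (Finset.mem_filter.2 ⟨hp', hinp'⟩) fun e => hne (eq_of_withHeight_eq e)
      _ ≤ ENNReal.ofReal D := by
          rw [edist_le_ofReal hD.le, lift_eq, lift_eq, hcol, dist_withHeight_self_height]
          exact hdiam p hp p' hp'

/-- **Correctness of the color-uniqueness-to-RCP reduction.** Let `S ⊆ ℝ²` be a finite set of
points colored by `col : ℝ² → {1, …, k}` (values ≥ 1), and `D > 0` at least the diameter of
`S`. Map each `p = (p_x, p_y)` of color `i` to `p' = (p_x, p_y, 2·i·D) ∈ ℝ³`, giving the set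
`P`. Then for any axis-parallel rectangle `q = [x₁,x₂] × [y₁,y₂]`, the closest-pair distance
of `P ∩ (q × ℝ)` is at most `D` iff some color has at least two points in `S ∩ q`. -/
theorem color_uniqueness_to_rcp_reduction
    [DecidableEq (EuclideanSpace ℝ (Fin 3))]
    (S : Finset (EuclideanSpace ℝ (Fin 2))) (col : EuclideanSpace ℝ (Fin 2) → ℕ)
    (k : ℕ) (hcol : ∀ p ∈ S, 1 ≤ col p ∧ col p ≤ k)
    (D : ℝ) (hD : 0 < D) (hdiam : ∀ p ∈ S, ∀ q ∈ S, dist p q ≤ D)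
    (x₁ x₂ y₁ y₂ : ℝ) :
    let lift : EuclideanSpace ℝ (Fin 2) → EuclideanSpace ℝ (Fin 3) :=
      fun p => WithLp.toLp 2 ![p 0, p 1, 2 * (col p : ℝ) * D]
    let inq : EuclideanSpace ℝ (Fin 2) → Prop :=
      fun p => x₁ ≤ p 0 ∧ p 0 ≤ x₂ ∧ y₁ ≤ p 1 ∧ p 1 ≤ y₂
    (closestPairDist ((S.filter fun p => inq p).image lift) ≤ ENNReal.ofReal D
      ↔ ∃ p ∈ S, ∃ p' ∈ S, p ≠ p' ∧ col p = col p' ∧ inq p ∧ inq p') :=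
  color_uniqueness_to_rcp_reduction_general S col D hD hdiam x₁ x₂ y₁ y₂
end

section
/- (Correctness of the set-intersection-to-color-uniqueness reduction, combinatorial core) Let S₁,…,S_m be finite sets of colors, and place for each i a cluster C_i of colored points in an ε-ball around (i, i) and a cluster C_i' around (m+i, i), where the points of C_i (resp. C_i') carry exactly the colors in S_i, with ε < 1/4. Then for indices j < i, the rectangle q = [i−ε, m+j+ε] × [j−ε, i+ε] contains exactly the points of C_i ∪ C_j', and therefore all colors among the points inside q are distinct if and only if S_i ∩ S_j = ∅. -/
/-!
Every point of a cluster lies within `ε` of its centre `(l, l)` or `(m + l, l)`. Distinct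
centres of the same kind differ by at least `1` in both coordinates, and `2ε < 1`, so the
rectangle `q` keeps exactly the clusters whose centres it contains: `C i` and `C' j`. These
two are far apart and each is injectively coloured by its set, so the colours inside `q`
are distinct exactly when `S i` and `S j` share no colour.
-/

open Finset

theorem Nat.eq_of_cast_lt_add_one {R : Type*} [Semiring R] [PartialOrder R]
    [IsStrictOrderedRing R] {a b : ℕ} (hab : (a : R) < b + 1) (hba : (b : R) < a + 1) :
    a = b := by
  have hab' : a < b + 1 := by exact_mod_cast hab
  have hba' : b < a + 1 := by exact_mod_cast hba
  omega

theorem abs_sub_le_of_dist_toLp_le {p : EuclideanSpace ℝ (Fin 2)} {a b ε : ℝ}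
    (h : dist p (WithLp.toLp 2 ![a, b]) ≤ ε) : |p 0 - a| ≤ ε ∧ |p 1 - b| ≤ ε := by
  constructor
  · simpa [Real.dist_eq] using (PiLp.dist_apply_le p _ 0).trans h
  · simpa [Real.dist_eq] using (PiLp.dist_apply_le p _ 1).trans h

theorem Set.sep_biUnion_eq_of_forall_mem {ι α : Type*} {s : Set ι} {A : ι → Set α}
    {q : α → Prop} {i : ι} (hi : i ∈ s) (h : ∀ l ∈ s, ∀ p ∈ A l, q p ↔ l = i) :
    {p ∈ ⋃ l ∈ s, A l | q p} = A i := by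
  ext p
  constructor
  · rintro ⟨hp, hq⟩
    obtain ⟨l, hl, hp⟩ := Set.mem_iUnion₂.1 hp
    rwa [← (h l hl p hp).1 hq]
  · intro hp
    exact ⟨Set.mem_iUnion₂.2 ⟨i, hi, hp⟩, (h i hi p hp).2 rfl⟩

theorem Finset.injOn_union_iff_disjoint_image {α β : Type*} [DecidableEq β] {f : α → β}
    {s t : Finset α} (hst : Disjoint s t) (hs : Set.InjOn f s) (ht : Set.InjOn f t) :
    Set.InjOn f (↑s ∪ ↑t) ↔ Disjoint (s.image f) (t.image f) := by
  rw [Set.injOn_union (Finset.disjoint_coe.2 hst), Finset.disjoint_iff_ne]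
  simp [hs, ht]

section Rectangle

variable {m i j l : ℕ} {ε x y : ℝ}

theorem near_diag_mem_rect_iff (hε : ε < 1 / 2) (hji : j ≤ i) (hi : i ≤ m)
    (hx : |x - l| ≤ ε) (hy : |y - l| ≤ ε) :
    ((i : ℝ) - ε ≤ x ∧ x ≤ (m : ℝ) + j + ε ∧ (j : ℝ) - ε ≤ y ∧ y ≤ (i : ℝ) + ε) ↔ l = i := by
  have cji : (j : ℝ) ≤ i := by exact_mod_cast hji
  have cim : (i : ℝ) ≤ m := by exact_mod_cast hi
  obtain ⟨hx₁, hx₂⟩ := abs_le.mp hx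
  obtain ⟨hy₁, hy₂⟩ := abs_le.mp hy
  constructor
  · rintro ⟨h₁, -, -, h₄⟩
    exact Nat.eq_of_cast_lt_add_one (R := ℝ) (by linarith) (by linarith)
  · rintro rfl
    have : (0 : ℝ) ≤ j := j.cast_nonneg
    refine ⟨?_, ?_, ?_, ?_⟩ <;> linarith

theorem near_shifted_diag_mem_rect_iff (hε : ε < 1 / 2) (hji : j ≤ i) (hi : i ≤ m)
    (hx : |x - (m + l)| ≤ ε) (hy : |y - l| ≤ ε) :
    ((i : ℝ) - ε ≤ x ∧ x ≤ (m : ℝ) + j + ε ∧ (j : ℝ) - ε ≤ y ∧ y ≤ (i : ℝ) + ε) ↔ l = j := by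
  have cji : (j : ℝ) ≤ i := by exact_mod_cast hji
  have cim : (i : ℝ) ≤ m := by exact_mod_cast hi
  obtain ⟨hx₁, hx₂⟩ := abs_le.mp hx
  obtain ⟨hy₁, hy₂⟩ := abs_le.mp hy
  constructor
  · rintro ⟨-, h₂, h₃, -⟩
    exact Nat.eq_of_cast_lt_add_one (R := ℝ) (by linarith) (by linarith)
  · rintro rfl
    have : (0 : ℝ) ≤ l := l.cast_nonneg
    refine ⟨?_, ?_, ?_, ?_⟩ <;> linarith

end Rectangle

theorem set_intersection_to_color_uniqueness_general {γ : Type*} [DecidableEq γ]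
    (m : ℕ) (Scol : ℕ → Finset γ)
    (C C' : ℕ → Finset (EuclideanSpace ℝ (Fin 2)))
    (col : EuclideanSpace ℝ (Fin 2) → γ)
    (ε : ℝ) (hε : ε < 1 / 4)
    (hC : ∀ l ∈ Finset.Icc 1 m, ∀ p ∈ C l,
      dist p (WithLp.toLp 2 ![(l : ℝ), (l : ℝ)] : EuclideanSpace ℝ (Fin 2)) ≤ ε)
    (hC' : ∀ l ∈ Finset.Icc 1 m, ∀ p ∈ C' l,
      dist p (WithLp.toLp 2 ![(m : ℝ) + (l : ℝ), (l : ℝ)] : EuclideanSpace ℝ (Fin 2)) ≤ ε)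
    (hcolC : ∀ l ∈ Finset.Icc 1 m, (C l).image col = Scol l ∧ Set.InjOn col (C l))
    (hcolC' : ∀ l ∈ Finset.Icc 1 m, (C' l).image col = Scol l ∧ Set.InjOn col (C' l))
    (i j : ℕ) (hj : 1 ≤ j) (hji : j < i) (hi : i ≤ m) :
    let P : Set (EuclideanSpace ℝ (Fin 2)) :=
      (⋃ l ∈ Finset.Icc 1 m, (C l : Set (EuclideanSpace ℝ (Fin 2)))) ∪
        ⋃ l ∈ Finset.Icc 1 m, (C' l : Set (EuclideanSpace ℝ (Fin 2)))
    let inq : EuclideanSpace ℝ (Fin 2) → Prop := fun p =>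
      (i : ℝ) - ε ≤ p 0 ∧ p 0 ≤ (m : ℝ) + (j : ℝ) + ε ∧
        (j : ℝ) - ε ≤ p 1 ∧ p 1 ≤ (i : ℝ) + ε
    ({p ∈ P | inq p} = (C i : Set (EuclideanSpace ℝ (Fin 2))) ∪ (C' j : Set _)) ∧
      (Set.InjOn col {p ∈ P | inq p} ↔ Disjoint (Scol i) (Scol j)) := by
  intro P inq
  have hi' : i ∈ Finset.Icc 1 m := Finset.mem_Icc.2 ⟨by omega, hi⟩
  have hj' : j ∈ Finset.Icc 1 m := Finset.mem_Icc.2 ⟨hj, by omega⟩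
  have hε₂ : ε < 1 / 2 := by linarith
  have hrect : {p ∈ P | inq p} = (C i : Set _) ∪ (C' j : Set _) := by
    refine Set.sep_union.trans (congrArg₂ (· ∪ ·) ?_ ?_)
    · refine Set.sep_biUnion_eq_of_forall_mem (by simpa using hi') fun l hl p hp => ?_
      obtain ⟨hx, hy⟩ := abs_sub_le_of_dist_toLp_le (hC l hl p hp)
      exact near_diag_mem_rect_iff hε₂ hji.le hi hx hy
    · refine Set.sep_biUnion_eq_of_forall_mem (by simpa using hj') fun l hl p hp => ?_
      obtain ⟨hx, hy⟩ := abs_sub_le_of_dist_toLp_le (hC' l hl p hp)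
      exact near_shifted_diag_mem_rect_iff hε₂ hji.le hi hx hy
  have hdisj : Disjoint (C i) (C' j) := Finset.disjoint_left.2 fun p hp hp' => by
    obtain ⟨hx, -⟩ := abs_sub_le_of_dist_toLp_le (hC i hi' p hp)
    obtain ⟨hx', -⟩ := abs_sub_le_of_dist_toLp_le (hC' j hj' p hp')
    have : (i : ℝ) + 1 ≤ m + j := by exact_mod_cast (by omega : i + 1 ≤ m + j)
    linarith [(abs_le.mp hx).2, (abs_le.mp hx').1]
  obtain ⟨himg, hinj⟩ := hcolC i hi'
  obtain ⟨himg', hinj'⟩ := hcolC' j hj'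
  refine ⟨hrect, ?_⟩
  rw [hrect, Finset.injOn_union_iff_disjoint_image hdisj hinj hinj', himg, himg']

/-- **Correctness of the set-intersection-to-color-uniqueness reduction (combinatorial
core).** Let `S₁, …, S_m` be finite sets of colors. For each `l ∈ {1,…,m}` place a cluster
`C l` of colored points inside the closed `ε`-ball around `(l, l)` and a cluster `C' l`
inside the closed `ε`-ball around `(m + l, l)`, where the colors occurring in `C l`
(resp. `C' l`) are exactly `S l` (with distinct points of a cluster having distinct colors),
and `0 < ε < 1/4`. Then for `1 ≤ j < i ≤ m`, the rectangle
`q = [i-ε, m+j+ε] × [j-ε, i+ε]` contains exactly the points of `C i ∪ C' j`, and all colors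
of the points inside `q` are distinct iff `S i ∩ S j = ∅`. -/
theorem set_intersection_to_color_uniqueness {γ : Type*} [DecidableEq γ]
    (m : ℕ) (Scol : ℕ → Finset γ)
    (C C' : ℕ → Finset (EuclideanSpace ℝ (Fin 2)))
    (col : EuclideanSpace ℝ (Fin 2) → γ)
    (ε : ℝ) (hε0 : 0 < ε) (hε : ε < 1 / 4)
    (hC : ∀ l ∈ Finset.Icc 1 m, ∀ p ∈ C l,
      dist p (WithLp.toLp 2 ![(l : ℝ), (l : ℝ)] : EuclideanSpace ℝ (Fin 2)) ≤ ε)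
    (hC' : ∀ l ∈ Finset.Icc 1 m, ∀ p ∈ C' l,
      dist p (WithLp.toLp 2 ![(m : ℝ) + (l : ℝ), (l : ℝ)] : EuclideanSpace ℝ (Fin 2)) ≤ ε)
    (hcolC : ∀ l ∈ Finset.Icc 1 m, (C l).image col = Scol l ∧ Set.InjOn col (C l))
    (hcolC' : ∀ l ∈ Finset.Icc 1 m, (C' l).image col = Scol l ∧ Set.InjOn col (C' l))
    (i j : ℕ) (hj : 1 ≤ j) (hji : j < i) (hi : i ≤ m) :
    let P : Set (EuclideanSpace ℝ (Fin 2)) :=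
      (⋃ l ∈ Finset.Icc 1 m, (C l : Set (EuclideanSpace ℝ (Fin 2)))) ∪
        ⋃ l ∈ Finset.Icc 1 m, (C' l : Set (EuclideanSpace ℝ (Fin 2)))
    let inq : EuclideanSpace ℝ (Fin 2) → Prop := fun p =>
      (i : ℝ) - ε ≤ p 0 ∧ p 0 ≤ (m : ℝ) + (j : ℝ) + ε ∧
        (j : ℝ) - ε ≤ p 1 ∧ p 1 ≤ (i : ℝ) + ε
    ({p ∈ P | inq p} = (C i : Set (EuclideanSpace ℝ (Fin 2))) ∪ (C' j : Set _)) ∧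
      (Set.InjOn col {p ∈ P | inq p} ↔ Disjoint (Scol i) (Scol j)) :=
  set_intersection_to_color_uniqueness_general m Scol C C' col ε hε hC hC' hcolC hcolC' i j hj hji
    hi
end
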